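/- arXiv:2302.03552 — 5 statements merged into one kernel-verified Lean document; each statement's English description precedes it below -/
import Mathlib

section
/- Let n ≥ 2 and let Λ ⊆ S^n be a closed subset such that the open set Ω = S^n \ Λ satisfies the weak Koebe–Maskit condition. Let C be a circle in S^n that is not contained in the closure of any connected component of Ω. Then for every sequence of circles (C_k) in S^n converging to C, the set limsup (C_k ∩ Λ) contains at least two points. (This is the group-free form of the paper's Lemma 4.5: the limit set of a discrete subgroup of SO°(n+1,1) satisfying WKM enters only through the closed set Λ and its complement Ω.) -/
open Metric Set

noncomputable section

/-- `Euc k` is the Euclidean space `ℝ^{k+1}`. -/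
abbrev Euc (k : ℕ) : Type := EuclideanSpace ℝ (Fin (k+1))

/-- The unit sphere `S^k ⊆ ℝ^{k+1}`. -/
def unitSphere (k : ℕ) : Set (Euc k) := Metric.sphere 0 1

/-- A circle in `S^n`: the intersection of `S^n` with a 2-dimensional affine
subspace of `ℝ^{n+1}`, provided this intersection is infinite. -/
def IsCircle (n : ℕ) (C : Set (Euc n)) : Prop :=
  ∃ P : AffineSubspace ℝ (Euc n),
    Module.finrank ℝ P.direction = 2 ∧ C = unitSphere n ∩ (P : Set (Euc n)) ∧ C.Infinite

/-- A codimension-one sphere in `S^m`: the intersection of `S^m` with an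
`m`-dimensional affine subspace of `ℝ^{m+1}`, provided it is infinite. -/
def IsCodimOneSphere (m : ℕ) (S : Set (Euc m)) : Prop :=
  ∃ H : AffineSubspace ℝ (Euc m),
    Module.finrank ℝ H.direction = m ∧ S = unitSphere m ∩ (H : Set (Euc m)) ∧ S.Infinite

/-- Convergence of a sequence of subsets in the Hausdorff distance. -/
def SetsConvergeTo {X : Type*} [MetricSpace X] (K : ℕ → Set X) (L : Set X) : Prop :=
  Filter.Tendsto (fun k => Metric.hausdorffDist (K k) L) Filter.atTop (nhds 0)

/-- `limsup` of a sequence of sets: `⋂_N closure (⋃_{k ≥ N} S_k)`. -/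
def setLimsup {X : Type*} [TopologicalSpace X] (S : ℕ → Set X) : Set X :=
  ⋂ N : ℕ, closure (⋃ k ≥ N, S k)

/-- The weak Koebe–Maskit condition: for every `ε > 0`, only finitely many
connected components of `Ω` have diameter greater than `ε`. -/
def WKM {X : Type*} [MetricSpace X] (Ω : Set X) : Prop :=
  ∀ ε > 0, {U : Set X | (∃ x ∈ Ω, U = connectedComponentIn Ω x) ∧ ε < Metric.diam U}.Finite

/-- `Λ ⊆ S^n` is doubly stable if every `ξ ∈ Λ` lies on a circle `C` such that for
every sequence of circles converging to `C` the limsup of the slices `C_k ∩ Λ`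
contains at least two points. -/
def DoublyStable (n : ℕ) (Λ : Set (Euc n)) : Prop :=
  ∀ ξ ∈ Λ, ∃ C : Set (Euc n), IsCircle n C ∧ ξ ∈ C ∧
    ∀ Ck : ℕ → Set (Euc n), (∀ k, IsCircle n (Ck k)) → SetsConvergeTo Ck C →
      (setLimsup (fun k => Ck k ∩ Λ)).Nontrivial

/-!
Suppose the limsup of the slices `C_k ∩ Λ` has at most one point. By compactness of the sphere
the slices then eventually lie in any given ball around a single point `ξ`, so for every `ε > 0`
the arcs `C_k \ B̄(ξ, ε)` eventually lie in `Ω`; being connected, each lies in one component of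
`Ω`. Two fixed points of `C \ {ξ}` force these components to have diameter bounded below, so by
WKM one component `U` occurs for infinitely many `k`. Since `C_k → C`, every point of `C \ {ξ}`
is then a limit of points of `U`, and as `C` has no isolated points, `C ⊆ closure U`.
-/

open Filter Real
open scoped RealInnerProductSpace

lemma exists_eq_sqrt_mul_cos_and_eq_sqrt_mul_sin (a b : ℝ) :
    ∃ θ, a = √(a ^ 2 + b ^ 2) * cos θ ∧ b = √(a ^ 2 + b ^ 2) * sin θ := by
  have hnorm : ‖(⟨a, b⟩ : ℂ)‖ = √(a ^ 2 + b ^ 2) := by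
    rw [Complex.norm_def, Complex.normSq_mk, sq, sq]
  exact ⟨Complex.arg ⟨a, b⟩, by rw [← hnorm, Complex.norm_mul_cos_arg],
    by rw [← hnorm, Complex.norm_mul_sin_arg]⟩

lemma min_cos_le_cos {x y z : ℝ} (hx : -π ≤ x) (hxy : x ≤ y) (hyz : y ≤ z) (hz : z ≤ π) :
    min (cos x) (cos z) ≤ cos y := by
  rcases le_total 0 y with hy | hy
  · exact min_le_of_right_le (cos_le_cos_of_nonneg_of_le_pi hy hz hyz)
  · rw [← cos_neg x, ← cos_neg y]
    exact min_le_of_left_le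
      (cos_le_cos_of_nonneg_of_le_pi (neg_nonneg.2 hy) (by linarith) (neg_le_neg hxy))

lemma Function.Periodic.isPreconnected_image_setOf_lt_cos_add_sin {X : Type*}
    [TopologicalSpace X] {g : ℝ → X} (hper : Function.Periodic g (2 * π)) (hg : Continuous g)
    (a b c : ℝ) : IsPreconnected (g '' {θ | c < a * cos θ + b * sin θ}) := by
  obtain ⟨φ, ha, hb⟩ := exists_eq_sqrt_mul_cos_and_eq_sqrt_mul_sin a b
  set R := √(a ^ 2 + b ^ 2)
  set S := {θ | c < R * cos (θ - φ)}
  have hS : {θ | c < a * cos θ + b * sin θ} = S := by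
    ext θ
    rw [mem_ofPred_eq, mem_ofPred_eq, cos_sub, ha, hb]
    ring_nf
  -- by periodicity it suffices to look at one period centred at `φ`
  have hperiod : g '' S = g '' (S ∩ Icc (φ - π) (φ + π)) := by
    refine (image_mono inter_subset_left).antisymm' ?_
    rintro _ ⟨θ, hθ, rfl⟩
    obtain ⟨h₁, h₂⟩ := toIcoMod_mem_Ico two_pi_pos (φ - π) θ
    rw [← self_sub_toIcoDiv_zsmul] at h₁ h₂
    refine ⟨_, ⟨?_, h₁, by linarith⟩, hper.sub_zsmul_eq _⟩
    rwa [mem_ofPred_eq, sub_right_comm, cos_periodic.sub_zsmul_eq]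
  have hord : (S ∩ Icc (φ - π) (φ + π)).OrdConnected := by
    refine ⟨fun x hx z hz y hy => ⟨?_, hx.2.1.trans hy.1, hy.2.trans hz.2.2⟩⟩
    calc c < min (R * cos (x - φ)) (R * cos (z - φ)) := lt_min hx.1 hz.1
      _ = R * min (cos (x - φ)) (cos (z - φ)) := (mul_min_of_nonneg _ _ (sqrt_nonneg _)).symm
      _ ≤ R * cos (y - φ) := by
        refine mul_le_mul_of_nonneg_left (min_cos_le_cos ?_ ?_ ?_ ?_) (sqrt_nonneg _)
        all_goals linarith [hx.2.1, hz.2.2, hy.1, hy.2]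
  rw [hS, hperiod]
  exact hord.isPreconnected.image g hg.continuousOn

section Circle

variable {E : Type*} [NormedAddCommGroup E] [InnerProductSpace ℝ E]

def circleParam (p u v : E) (r θ : ℝ) : E := p + (r * cos θ) • u + (r * sin θ) • v

lemma circleParam_periodic (p u v : E) (r : ℝ) :
    Function.Periodic (circleParam p u v r) (2 * π) := by
  intro θ
  simp only [circleParam, cos_add_two_pi, sin_add_two_pi]

lemma continuous_circleParam (p u v : E) (r : ℝ) : Continuous (circleParam p u v r) := by
  unfold circleParam
  fun_prop

variable {u v : E}

lemma norm_smul_add_smul_sq (hu : ‖u‖ = 1) (hv : ‖v‖ = 1) (huv : ⟪u, v⟫ = 0) (a b : ℝ) :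
    ‖a • u + b • v‖ ^ 2 = a ^ 2 + b ^ 2 := by
  rw [norm_add_sq_real, norm_smul, norm_smul, real_inner_smul_left, real_inner_smul_right, huv,
    hu, hv]
  simp [sq_abs]

lemma dist_circleParam_sq (hu : ‖u‖ = 1) (hv : ‖v‖ = 1) (huv : ⟪u, v⟫ = 0) (p ξ : E)
    (r θ : ℝ) :
    dist (circleParam p u v r θ) ξ ^ 2 = ‖p - ξ‖ ^ 2 + r ^ 2
      + 2 * r * ⟪p - ξ, u⟫ * cos θ + 2 * r * ⟪p - ξ, v⟫ * sin θ := by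
  have hsplit : circleParam p u v r θ - ξ = (p - ξ) + ((r * cos θ) • u + (r * sin θ) • v) := by
    unfold circleParam; abel
  rw [dist_eq_norm, hsplit, norm_add_sq_real, norm_smul_add_smul_sq hu hv huv, inner_add_right,
    real_inner_smul_right, real_inner_smul_right, mul_pow, mul_pow, ← mul_add, cos_sq_add_sin_sq]
  ring

lemma isPreconnected_range_circleParam_diff_closedBall (hu : ‖u‖ = 1) (hv : ‖v‖ = 1)
    (huv : ⟪u, v⟫ = 0) (p ξ : E) (r : ℝ) {ε : ℝ} (hε : 0 ≤ ε) :
    IsPreconnected (range (circleParam p u v r) \ closedBall ξ ε) := by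
  have hset : range (circleParam p u v r) \ closedBall ξ ε = circleParam p u v r ''
      {θ | ε ^ 2 - (‖p - ξ‖ ^ 2 + r ^ 2) <
        2 * r * ⟪p - ξ, u⟫ * cos θ + 2 * r * ⟪p - ξ, v⟫ * sin θ} := by
    rw [sdiff_eq, ← image_preimage_eq_range_inter]
    congr 1
    ext θ
    rw [mem_preimage, mem_compl_iff, mem_closedBall, not_le, mem_ofPred_eq,
      ← pow_lt_pow_iff_left₀ hε dist_nonneg two_ne_zero, dist_circleParam_sq hu hv huv]
    constructor <;> intro h <;> linarith
  rw [hset]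
  exact (circleParam_periodic p u v r).isPreconnected_image_setOf_lt_cos_add_sin
    (continuous_circleParam p u v r) _ _ _

lemma sphere_inter_eq_range_circleParam {P : AffineSubspace ℝ E}
    (hP : Module.finrank ℝ P.direction = 2) {p : E} (hp : p ∈ P) {r : ℝ} (hr : 0 ≤ r) :
    ∃ u v : E, ‖u‖ = 1 ∧ ‖v‖ = 1 ∧ ⟪u, v⟫ = 0 ∧
      sphere p r ∩ (P : Set E) = range (circleParam p u v r) := by
  have : FiniteDimensional ℝ P.direction := Module.finite_of_finrank_eq_succ hP
  let o : OrthonormalBasis (Fin 2) ℝ P.direction :=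
    (stdOrthonormalBasis ℝ P.direction).reindex (finCongr hP)
  have hu : ‖(o 0 : E)‖ = 1 := o.orthonormal.1 0
  have hv : ‖(o 1 : E)‖ = 1 := o.orthonormal.1 1
  have huv : ⟪(o 0 : E), (o 1 : E)⟫ = 0 := o.orthonormal.2 (by decide)
  refine ⟨o 0, o 1, hu, hv, huv, Set.ext fun x => ⟨?_, ?_⟩⟩
  · rintro ⟨hxr, hxP⟩
    set a := ⟪(o 0 : E), x - p⟫
    set b := ⟪(o 1 : E), x - p⟫
    have hy : x - p = a • (o 0 : E) + b • (o 1 : E) := by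
      have := congrArg Subtype.val (o.sum_repr' ⟨x - p, AffineSubspace.vsub_mem_direction hxP hp⟩)
      simpa [Fin.sum_univ_two] using this.symm
    have hab : √(a ^ 2 + b ^ 2) = r := by
      rw [← norm_smul_add_smul_sq hu hv huv, ← hy, ← dist_eq_norm, mem_sphere.1 hxr,
        sqrt_sq hr]
    obtain ⟨θ, ha, hb⟩ := exists_eq_sqrt_mul_cos_and_eq_sqrt_mul_sin a b
    refine ⟨θ, ?_⟩
    rw [hab] at ha hb
    rw [circleParam, ← ha, ← hb, add_assoc, ← hy, add_sub_cancel]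
  · rintro ⟨θ, rfl⟩
    refine ⟨?_, ?_⟩
    · rw [mem_sphere, ← sq_eq_sq₀ dist_nonneg hr, dist_circleParam_sq hu hv huv]
      simp
    · have hdir : (r * cos θ) • (o 0 : E) + (r * sin θ) • (o 1 : E) ∈ P.direction :=
        P.direction.add_mem (P.direction.smul_mem _ (o 0).2) (P.direction.smul_mem _ (o 1).2)
      have := AffineSubspace.vadd_mem_of_mem_direction hdir hp
      rwa [vadd_eq_add, add_comm, ← add_assoc] at this

lemma sphere_inter_eq_sphere_orthogonalProjection_inter {P : AffineSubspace ℝ E} [Nonempty P]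
    [P.direction.HasOrthogonalProjection] {c x₀ : E} {R : ℝ} (hx₀ : x₀ ∈ sphere c R ∩ P) :
    sphere c R ∩ P = sphere (EuclideanGeometry.orthogonalProjection P c : E)
      (dist x₀ (EuclideanGeometry.orthogonalProjection P c)) ∩ P := by
  ext x
  simp only [mem_inter_iff, mem_sphere, and_congr_left_iff]
  intro hx
  rw [← mem_sphere.1 hx₀.1]
  exact EuclideanGeometry.dist_eq_iff_dist_orthogonalProjection_eq c hx hx₀.2

end Circle

section Limsup

variable {X : Type*}

lemma eventually_subset_of_setLimsup_subset [TopologicalSpace X] {K : Set X} (hK : IsCompact K)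
    {S : ℕ → Set X} (hSK : ∀ k, S k ⊆ K) {U : Set X} (hU : IsOpen U)
    (hSU : setLimsup S ⊆ U) : ∀ᶠ k in atTop, S k ⊆ U := by
  have hanti : Antitone fun N => closure (⋃ k ≥ N, S k) \ U := fun N M hNM =>
    sdiff_subset_sdiff_left (closure_mono (biUnion_subset_biUnion_left fun k hk => hNM.trans hk))
  obtain ⟨N, hN⟩ := hK.elim_directed_family_closed _ (fun N => isClosed_closure.sdiff hU)
    (eq_empty_of_forall_notMem fun x ⟨_, hx⟩ => (mem_iInter.1 hx 0).2
      (hSU (mem_iInter.2 fun N => (mem_iInter.1 hx N).1))) hanti.directed_ge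
  filter_upwards [eventually_ge_atTop N] with k hk x hx
  by_contra hxU
  exact hN.subset ⟨hSK k hx, subset_closure (mem_biUnion hk hx), hxU⟩

lemma exists_eventually_subset_ball_of_setLimsup_subsingleton [PseudoMetricSpace X] [Nonempty X]
    {K : Set X} (hK : IsCompact K) {S : ℕ → Set X} (hSK : ∀ k, S k ⊆ K)
    (hS : (setLimsup S).Subsingleton) : ∃ ξ, ∀ ε > 0, ∀ᶠ k in atTop, S k ⊆ ball ξ ε := by
  rcases hS.eq_empty_or_singleton with hS | ⟨ξ, hS⟩
  · refine ⟨Classical.arbitrary X, fun ε _ => ?_⟩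
    filter_upwards [eventually_subset_of_setLimsup_subset hK hSK isOpen_empty hS.subset]
      with k hk using hk.trans (empty_subset _)
  · exact ⟨ξ, fun ε hε => eventually_subset_of_setLimsup_subset hK hSK isOpen_ball
      (hS ▸ singleton_subset_iff.2 (mem_ball_self hε))⟩

end Limsup

lemma SetsConvergeTo.eventually_exists_dist_lt {X : Type*} [MetricSpace X] {K : ℕ → Set X}
    {L : Set X} (h : SetsConvergeTo K L) (hKne : ∀ k, (K k).Nonempty)
    (hKb : ∀ k, Bornology.IsBounded (K k)) (hLb : Bornology.IsBounded L) {c : X} (hc : c ∈ L)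
    {η : ℝ} (hη : 0 < η) : ∀ᶠ k in atTop, ∃ y ∈ K k, dist y c < η :=
  (h.eventually (gt_mem_nhds hη)).mono fun k hk => exists_dist_lt_of_hausdorffDist_lt' hc hk
    (hausdorffEDist_ne_top_of_nonempty_of_bounded (hKne k) ⟨c, hc⟩ (hKb k) hLb)

lemma Filter.Eventually.exists_frequently_of_finite {α ι : Type*} {l : Filter α} [l.NeBot]
    {s : Set ι} (hs : s.Finite) {p : ι → α → Prop} (h : ∀ᶠ x in l, ∃ i ∈ s, p i x) :
    ∃ i ∈ s, ∃ᶠ x in l, p i x := by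
  by_contra! hcon
  obtain ⟨x, ⟨i, hi, hpi⟩, hnot⟩ := (h.and ((eventually_all_finite hs).2 hcon)).exists
  exact hnot i hi hpi

lemma IsPreconnected.subset_closure_diff_singleton {X : Type*} [TopologicalSpace X] [T1Space X]
    {C : Set X} (hC : IsPreconnected C) (hnt : C.Nontrivial) (ξ : X) :
    C ⊆ closure (C \ {ξ}) := by
  intro c hc
  by_cases hcξ : c = ξ
  · subst hcξ
    exact mem_closure_iff_clusterPt.2
      (accPt_principal_iff_clusterPt.1 (hC.preperfect_of_nontrivial hnt c hc))
  · exact subset_closure ⟨hc, hcξ⟩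

section Components

variable {X : Type*} [MetricSpace X] {Ω C : Set X} {ξ : X} {K : ℕ → Set X}

lemma eventually_exists_component_diam_gt (hΩ : Bornology.IsBounded Ω)
    (happrox : ∀ c ∈ C, ∀ η > 0, ∀ᶠ k in atTop, ∃ y ∈ K k, dist y c < η)
    (hconn : ∀ k, ∀ ε > 0, IsPreconnected (K k \ closedBall ξ ε))
    (hsub : ∀ ε > 0, ∀ᶠ k in atTop, K k \ closedBall ξ ε ⊆ Ω)
    {c₁ c₂ : X} (hc₁ : c₁ ∈ C) (hc₂ : c₂ ∈ C) {ε : ℝ} (hε : 0 < ε)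
    (h₁ : 3 * ε ≤ dist c₁ ξ) (h₂ : 3 * ε ≤ dist c₂ ξ) (h₁₂ : 3 * ε ≤ dist c₁ c₂) :
    ∀ᶠ k in atTop, ∃ U ∈ {U | (∃ x ∈ Ω, U = connectedComponentIn Ω x) ∧ ε < diam U},
      (K k \ closedBall ξ ε).Nonempty ∧ K k \ closedBall ξ ε ⊆ U := by
  filter_upwards [happrox c₁ hc₁ ε hε, happrox c₂ hc₂ ε hε, hsub ε hε]
    with k ⟨y₁, hy₁, hd₁⟩ ⟨y₂, hy₂, hd₂⟩ hkΩ
  have hy₁D : y₁ ∈ K k \ closedBall ξ ε := ⟨hy₁, by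
    rw [mem_closedBall, not_le]; linarith [dist_triangle_left c₁ ξ y₁]⟩
  have hy₂D : y₂ ∈ K k \ closedBall ξ ε := ⟨hy₂, by
    rw [mem_closedBall, not_le]; linarith [dist_triangle_left c₂ ξ y₂]⟩
  have hDU := (hconn k ε hε).subset_connectedComponentIn hy₁D hkΩ
  refine ⟨_, ⟨⟨y₁, hkΩ hy₁D, rfl⟩, ?_⟩, ⟨y₁, hy₁D⟩, hDU⟩
  calc ε < dist y₁ y₂ := by linarith [dist_triangle4 c₁ y₁ y₂ c₂, dist_comm c₁ y₁]
    _ ≤ diam (connectedComponentIn Ω y₁) :=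
      dist_le_diam_of_mem (hΩ.subset (connectedComponentIn_subset _ _)) (hDU hy₁D) (hDU hy₂D)

lemma diff_singleton_subset_closure_of_frequently {x : X}
    (happrox : ∀ c ∈ C, ∀ η > 0, ∀ᶠ k in atTop, ∃ y ∈ K k, dist y c < η)
    (hconn : ∀ k, ∀ ε > 0, IsPreconnected (K k \ closedBall ξ ε))
    (hsub : ∀ ε > 0, ∀ᶠ k in atTop, K k \ closedBall ξ ε ⊆ Ω) {ε₀ : ℝ} (hε₀ : 0 < ε₀)
    (hfreq : ∃ᶠ k in atTop, (K k \ closedBall ξ ε₀).Nonempty ∧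
      K k \ closedBall ξ ε₀ ⊆ connectedComponentIn Ω x) :
    C \ {ξ} ⊆ closure (connectedComponentIn Ω x) := by
  rintro c ⟨hc, hcξ⟩
  have hcξ : 0 < dist c ξ := dist_pos.2 hcξ
  rw [Metric.mem_closure_iff]
  intro η hη
  set ε := min ε₀ (dist c ξ / 2)
  obtain ⟨k, ⟨⟨z, hz⟩, hzU⟩, ⟨y, hyK, hyc⟩, hkΩ⟩ := (hfreq.and_eventually
    ((happrox c hc (min η (dist c ξ / 2)) (by positivity)).and (hsub ε (by positivity)))).exists
  have hyD : y ∈ K k \ closedBall ξ ε := ⟨hyK, by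
    rw [mem_closedBall, not_le]
    linarith [dist_triangle_left c ξ y, min_le_right η (dist c ξ / 2),
      min_le_right ε₀ (dist c ξ / 2)]⟩
  -- the arc for the smaller radius `ε` contains the one for `ε₀`, hence meets the same component
  have hzD : z ∈ K k \ closedBall ξ ε :=
    sdiff_subset_sdiff_right (closedBall_subset_closedBall (min_le_left _ _)) hz
  have hDU : K k \ closedBall ξ ε ⊆ connectedComponentIn Ω x := by
    rw [connectedComponentIn_eq (hzU hz)]
    exact (hconn k ε (by positivity)).subset_connectedComponentIn hzD hkΩ
  exact ⟨y, hDU hyD, by rw [dist_comm]; exact hyc.trans_le (min_le_left _ _)⟩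

theorem exists_diff_singleton_subset_closure_connectedComponentIn_of_WKM (hWKM : WKM Ω)
    (hΩ : Bornology.IsBounded Ω) (hC : (C \ {ξ}).Nontrivial)
    (happrox : ∀ c ∈ C, ∀ η > 0, ∀ᶠ k in atTop, ∃ y ∈ K k, dist y c < η)
    (hconn : ∀ k, ∀ ε > 0, IsPreconnected (K k \ closedBall ξ ε))
    (hsub : ∀ ε > 0, ∀ᶠ k in atTop, K k \ closedBall ξ ε ⊆ Ω) :
    ∃ x ∈ Ω, C \ {ξ} ⊆ closure (connectedComponentIn Ω x) := by
  obtain ⟨c₁, ⟨hc₁, hc₁ξ⟩, c₂, ⟨hc₂, hc₂ξ⟩, hc₁₂⟩ := hC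
  set δ := min (min (dist c₁ ξ) (dist c₂ ξ)) (dist c₁ c₂)
  have hδ : 0 < δ := lt_min (lt_min (dist_pos.2 hc₁ξ) (dist_pos.2 hc₂ξ)) (dist_pos.2 hc₁₂)
  have hδ₁ : δ ≤ dist c₁ ξ := (min_le_left _ _).trans (min_le_left _ _)
  have hδ₂ : δ ≤ dist c₂ ξ := (min_le_left _ _).trans (min_le_right _ _)
  have hδ₁₂ : δ ≤ dist c₁ c₂ := min_le_right _ _
  obtain ⟨_, ⟨⟨x, hx, rfl⟩, -⟩, hfreq⟩ :=
    (eventually_exists_component_diam_gt hΩ happrox hconn hsub hc₁ hc₂ (ε := δ / 3)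
      (by positivity) (by linarith) (by linarith) (by linarith)).exists_frequently_of_finite
      (hWKM _ (by positivity))
  exact ⟨x, hx, diff_singleton_subset_closure_of_frequently happrox hconn hsub
    (by positivity) hfreq⟩

end Components

namespace IsCircle

variable {n : ℕ} {C : Set (Euc n)}

lemma subset_unitSphere (hC : IsCircle n C) : C ⊆ unitSphere n := by
  obtain ⟨P, -, rfl, -⟩ := hC
  exact inter_subset_left

lemma infinite (hC : IsCircle n C) : C.Infinite := by
  obtain ⟨P, -, -, hinf⟩ := hC
  exact hinf

lemma exists_eq_range_circleParam (hC : IsCircle n C) :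
    ∃ (p u v : Euc n) (r : ℝ), ‖u‖ = 1 ∧ ‖v‖ = 1 ∧ ⟪u, v⟫ = 0 ∧
      C = range (circleParam p u v r) := by
  obtain ⟨P, hP, rfl, hinf⟩ := hC
  obtain ⟨x₀, hx₀⟩ := hinf.nonempty
  have : Nonempty P := ⟨⟨x₀, hx₀.2⟩⟩
  obtain ⟨u, v, hu, hv, huv, heq⟩ := sphere_inter_eq_range_circleParam hP
    (EuclideanGeometry.orthogonalProjection_mem (0 : Euc n)) (dist_nonneg (x := x₀))
  exact ⟨_, u, v, _, hu, hv, huv, (sphere_inter_eq_sphere_orthogonalProjection_inter hx₀).trans heq⟩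

lemma isPreconnected (hC : IsCircle n C) : IsPreconnected C := by
  obtain ⟨p, u, v, r, -, -, -, rfl⟩ := hC.exists_eq_range_circleParam
  exact isPreconnected_range (continuous_circleParam p u v r)

lemma isPreconnected_diff_closedBall (hC : IsCircle n C) (ξ : Euc n) {ε : ℝ} (hε : 0 ≤ ε) :
    IsPreconnected (C \ closedBall ξ ε) := by
  obtain ⟨p, u, v, r, hu, hv, huv, rfl⟩ := hC.exists_eq_range_circleParam
  exact isPreconnected_range_circleParam_diff_closedBall hu hv huv p ξ r hε

end IsCircle

theorem limsup_slices_nontrivial_of_WKM_general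
    (n : ℕ) (Λ : Set (Euc n))
    (hWKM : WKM (unitSphere n \ Λ))
    (C : Set (Euc n)) (hC : IsCircle n C)
    (hCnot : ∀ x ∈ unitSphere n \ Λ,
      ¬ C ⊆ closure (connectedComponentIn (unitSphere n \ Λ) x))
    (Ck : ℕ → Set (Euc n)) (hCk : ∀ k, IsCircle n (Ck k))
    (hconv : SetsConvergeTo Ck C) :
    ∃ a b, a ≠ b ∧ a ∈ setLimsup (fun k => Ck k ∩ Λ) ∧
      b ∈ setLimsup (fun k => Ck k ∩ Λ) := by
  by_contra! hL
  obtain ⟨ξ, hξ⟩ := exists_eventually_subset_ball_of_setLimsup_subsingleton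
    (isCompact_sphere 0 1) (fun k => inter_subset_left.trans (hCk k).subset_unitSphere)
    (fun a ha b hb => by_contra fun hab => hL a b hab ha hb)
  have hbdd : ∀ {S}, S ⊆ unitSphere n → Bornology.IsBounded S := isBounded_sphere.subset
  have hsub : ∀ ε > 0, ∀ᶠ k in atTop, Ck k \ closedBall ξ ε ⊆ unitSphere n \ Λ := fun ε hε =>
    (hξ ε hε).mono fun k hk y hy => ⟨(hCk k).subset_unitSphere hy.1,
      fun hyΛ => hy.2 (ball_subset_closedBall (hk ⟨hy.1, hyΛ⟩))⟩
  obtain ⟨x, hx, hCU⟩ := exists_diff_singleton_subset_closure_connectedComponentIn_of_WKM hWKM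
    (hbdd sdiff_subset) (hC.infinite.sdiff (finite_singleton ξ)).nontrivial
    (fun c hc η hη => hconv.eventually_exists_dist_lt (fun k => (hCk k).infinite.nonempty)
      (fun k => hbdd (hCk k).subset_unitSphere) (hbdd hC.subset_unitSphere) hc hη)
    (fun k ε hε => (hCk k).isPreconnected_diff_closedBall ξ hε.le) hsub
  exact hCnot x hx ((hC.isPreconnected.subset_closure_diff_singleton hC.infinite.nontrivial ξ).trans
    (closure_minimal hCU isClosed_closure))

/-- Group-free form of Lemma 4.5: if `Ω = S^n \ Λ` satisfies WKM and the circle `C`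
is not contained in the closure of any connected component of `Ω`, then for any
sequence of circles `C_k → C`, `limsup (C_k ∩ Λ)` has at least two points. -/
theorem limsup_slices_nontrivial_of_WKM
    (n : ℕ) (hn : 2 ≤ n) (Λ : Set (Euc n)) (hΛsub : Λ ⊆ unitSphere n)
    (hΛcl : IsClosed Λ) (hWKM : WKM (unitSphere n \ Λ))
    (C : Set (Euc n)) (hC : IsCircle n C)
    (hCnot : ∀ x ∈ unitSphere n \ Λ,
      ¬ C ⊆ closure (connectedComponentIn (unitSphere n \ Λ) x))
    (Ck : ℕ → Set (Euc n)) (hCk : ∀ k, IsCircle n (Ck k))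
    (hconv : SetsConvergeTo Ck C) :
    ∃ a b, a ≠ b ∧ a ∈ setLimsup (fun k => Ck k ∩ Λ) ∧
      b ∈ setLimsup (fun k => Ck k ∩ Λ) :=
  limsup_slices_nontrivial_of_WKM_general n Λ hWKM C hC hCnot Ck hCk hconv
end
end

section
/- Let n, m ≥ 2. Let Λ ⊆ S^n be a nonempty closed doubly stable subset and let f : Λ → S^m be a continuous injective map with f(Λ) ≠ S^m. Then there exist a circle C in S^n, a codimension-one sphere S in S^m, and a point ξ ∈ Λ with ξ ∈ C and f(ξ) ∈ S, such that there is NO sequence of pairs (C_k, S_k), where C_k is a circle in S^n with C_k ∩ Λ ≠ ∅, S_k is a codimension-one sphere in S^m, and f(C_k ∩ Λ) ⊆ S_k, for which C_k converges to C and S_k converges to S. (This is the group-free form of the paper's Theorem 4.1: the Γ_ρ-orbit of a pair (C₀,S₀) with f(C₀ ∩ Λ) ⊆ S₀ consists of such pairs, so this statement implies that the orbit is not dense.) -/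
/-!
The image `K = f(Λ)` is a compact proper subset of `S^m` with at least two points (a doubly
stable set is not a singleton), so it has a strictly exposed point `p = f ξ` whose supporting
hyperplane cuts `S^m` in a codimension-one sphere `S`. Let `C` be a stable circle through `ξ`.
If circles `C_k → C` and spheres `S_k → S` satisfied `f(C_k ∩ Λ) ⊆ S_k`, then `f` would map the
limsup of the `C_k ∩ Λ` into `S ∩ K = {p}`; but that limsup has two points and `f` is injective.
-/

open Metric Set

noncomputable section

open Module RealInnerProductSpace

theorem setLimsup_subset_of_isClosed {X : Type*} [TopologicalSpace X] {T : ℕ → Set X}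
    {A : Set X} (hA : IsClosed A) (hT : ∀ k, T k ⊆ A) : setLimsup T ⊆ A :=
  (iInter_subset _ 0).trans (closure_minimal (iUnion₂_subset fun k _ => hT k) hA)

theorem setsConvergeTo_const {X : Type*} [MetricSpace X] (L : Set X) :
    SetsConvergeTo (fun _ => L) L := by
  simpa only [SetsConvergeTo, hausdorffDist_self_zero] using tendsto_const_nhds

theorem mapsTo_setLimsup_of_setsConvergeTo {X Y : Type*} [MetricSpace X] [MetricSpace Y]
    {Λ : Set X} {g : X → Y} {T : ℕ → Set X} {Sk : ℕ → Set Y} {S : Set Y}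
    (hΛ : IsClosed Λ) (hg : ContinuousOn g Λ) (hT : ∀ k, T k ⊆ Λ) (hS : IsClosed S)
    (hfin : ∀ k, hausdorffEDist (Sk k) S ≠ ⊤) (hconv : SetsConvergeTo Sk S)
    (hmaps : ∀ k, g '' T k ⊆ Sk k) : MapsTo g (setLimsup T) S := by
  intro z hz
  refine hS.closure_subset (Metric.mem_closure_iff.2 fun ε hε => ?_)
  obtain ⟨δ, hδ, hgδ⟩ := Metric.continuousWithinAt_iff.1
    (hg z (setLimsup_subset_of_isClosed hΛ hT hz)) (ε / 2) (half_pos hε)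
  obtain ⟨N, hN⟩ := Metric.tendsto_atTop.1 hconv (ε / 2) (half_pos hε)
  obtain ⟨w, hw, hzw⟩ := Metric.mem_closure_iff.1 (mem_iInter.1 hz N) δ hδ
  obtain ⟨k, hk, hwk⟩ : ∃ k ≥ N, w ∈ T k := by simpa only [mem_iUnion, exists_prop] using hw
  have hdist : hausdorffDist (Sk k) S < ε / 2 := by
    simpa only [Real.dist_0_eq_abs, abs_of_nonneg hausdorffDist_nonneg] using hN k hk
  obtain ⟨s, hs, hws⟩ := exists_dist_lt_of_hausdorffDist_lt (hmaps k (mem_image_of_mem g hwk)) hdist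
    (hfin k)
  have hgzw : dist (g z) (g w) < ε / 2 := by
    rw [dist_comm]; exact hgδ (hT k hwk) (by rwa [dist_comm])
  refine ⟨s, hs, ?_⟩
  calc dist (g z) s ≤ dist (g z) (g w) + dist (g w) s := dist_triangle _ _ _
    _ < ε / 2 + ε / 2 := add_lt_add hgzw hws
    _ = ε := add_halves ε

theorem DoublyStable.nontrivial {n : ℕ} {Λ : Set (Euc n)} (hds : DoublyStable n Λ)
    (hΛ : IsClosed Λ) (hne : Λ.Nonempty) : Λ.Nontrivial := by
  obtain ⟨ξ, hξ⟩ := hne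
  obtain ⟨C, hC, -, hst⟩ := hds ξ hξ
  exact (hst _ (fun _ => hC) (setsConvergeTo_const C)).mono
    (setLimsup_subset_of_isClosed hΛ fun _ => inter_subset_right)

section InnerProductSpace

variable {E : Type*} [NormedAddCommGroup E] [InnerProductSpace ℝ E]

/-- The inequality `⟪w, p⟫ ^ 2 < ‖w‖ ^ 2` says that the supporting hyperplane `⟪w, ·⟫ = ⟪w, p⟫`
cuts the unit sphere in more than a point. The witnesses: `p` maximizes `⟪q, ·⟫` on `K`, and
`w = q + p`. -/
theorem exists_strictlyExposed_of_subset_sphere {K : Set E} (hK : IsCompact K)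
    (hKs : K ⊆ sphere 0 1) (hKnt : K.Nontrivial) {q : E} (hq : q ∈ sphere (0 : E) 1)
    (hqK : q ∉ K) :
    ∃ p ∈ K, ∃ w : E, ⟪w, p⟫ ^ 2 < ‖w‖ ^ 2 ∧ ∀ y ∈ K, y ≠ p → ⟪w, y⟫ < ⟪w, p⟫ := by
  obtain ⟨p, hpK, hmax⟩ := hK.exists_isMaxOn hKnt.nonempty
    (continuous_const.inner continuous_id : Continuous fun y : E => ⟪q, y⟫).continuousOn
  have hpmax : ∀ y ∈ K, ⟪q, y⟫ ≤ ⟪q, p⟫ := fun y hy => hmax hy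
  have hq1 : ‖q‖ = 1 := mem_sphere_zero_iff_norm.1 hq
  have hunit : ∀ y ∈ K, ‖y‖ = 1 := fun y hy => mem_sphere_zero_iff_norm.1 (hKs hy)
  have hlt : ⟪q, p⟫ < 1 :=
    (inner_lt_one_iff_real_of_norm_eq_one hq1 (hunit p hpK)).2 (ne_of_mem_of_not_mem hpK hqK).symm
  have hgt : -1 < ⟪q, p⟫ := by
    obtain ⟨z, hzK, hz⟩ := hKnt.exists_ne (-q)
    have := (inner_lt_one_iff_real_of_norm_eq_one (by rwa [norm_neg]) (hunit z hzK)).2 hz.symm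
    linarith [inner_neg_left (𝕜 := ℝ) q z, hpmax z hzK]
  refine ⟨p, hpK, q + p, ?_, fun y hyK hyp => ?_⟩
  · rw [norm_add_sq_real, inner_add_left, real_inner_self_eq_norm_sq, hq1, hunit p hpK]
    nlinarith
  · have := (inner_lt_one_iff_real_of_norm_eq_one (hunit p hpK) (hunit y hyK)).2 hyp.symm
    rw [inner_add_left, inner_add_left, real_inner_self_eq_norm_sq, hunit p hpK]
    linarith [hpmax y hyK]

theorem infinite_sphere_of_one_lt_rank (h : 1 < Module.rank ℝ E) (x : E) {r : ℝ}
    (hr : 0 < r) : (sphere x r).Infinite := by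
  have : Nontrivial E := rank_pos_iff_nontrivial.1 (zero_lt_one.trans h)
  obtain ⟨v, hv⟩ := exists_norm_eq E hr.le
  have hv0 : v ≠ 0 := norm_pos_iff.1 (hv ▸ hr)
  refine (isConnected_sphere h x hr.le).isPreconnected.infinite_of_nontrivial
    ⟨x + v, by simp [hv], x - v, by simp [hv], fun hxv => hv0 ?_⟩
  rw [sub_eq_add_neg, add_right_inj] at hxv
  have h2v : (2 : ℝ) • v = 0 := by rw [two_smul]; simpa using congrArg (· + v) hxv
  exact (smul_eq_zero.1 h2v).resolve_left two_ne_zero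

theorem coe_mk'_orthogonal_span_singleton {w : E} (hw : w ≠ 0) (c : ℝ) :
    (AffineSubspace.mk' ((c / ‖w‖ ^ 2) • w) (ℝ ∙ w)ᗮ : Set E) = {y | ⟪w, y⟫ = c} := by
  ext y
  rw [SetLike.mem_coe, AffineSubspace.mem_mk', Submodule.mem_orthogonal_singleton_iff_inner_right,
    vsub_eq_sub, inner_sub_right, real_inner_smul_right, real_inner_self_eq_norm_sq,
    div_mul_cancel₀ _ (by positivity), sub_eq_zero, mem_ofPred_eq]

theorem infinite_sphere_inter_hyperplane [FiniteDimensional ℝ E] (hE : 2 < finrank ℝ E)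
    {w : E} {c : ℝ} (hc : c ^ 2 < ‖w‖ ^ 2) :
    (sphere (0 : E) 1 ∩ {y | ⟪w, y⟫ = c}).Infinite := by
  have hw : w ≠ 0 := by rintro rfl; rw [norm_zero] at hc; nlinarith [sq_nonneg c]
  have hw2 : 0 < ‖w‖ ^ 2 := by positivity
  have hW : 1 < Module.rank ℝ (ℝ ∙ w)ᗮ := by
    have := (ℝ ∙ w).finrank_add_finrank_orthogonal
    rw [finrank_span_singleton hw] at this
    rw [← finrank_eq_rank]
    exact_mod_cast (by omega : 1 < finrank ℝ (ℝ ∙ w)ᗮ)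
  set a := c / ‖w‖ ^ 2
  set r := √(1 - c ^ 2 / ‖w‖ ^ 2)
  have hr : 0 < r := Real.sqrt_pos.2 (by rwa [sub_pos, div_lt_one hw2])
  have hr2 : r ^ 2 = 1 - c ^ 2 / ‖w‖ ^ 2 :=
    Real.sq_sqrt (by rw [sub_nonneg, div_le_one hw2]; exact hc.le)
  refine ((infinite_sphere_of_one_lt_rank hW 0 hr).image
    (f := fun x : (ℝ ∙ w)ᗮ => a • w + (x : E))
    fun x _ y _ h => Subtype.ext (add_left_cancel h)).mono ?_
  rintro _ ⟨x, hx, rfl⟩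
  have hwx : ⟪w, (x : E)⟫ = 0 := Submodule.mem_orthogonal_singleton_iff_inner_right.1 x.2
  have hxr : ‖(x : E)‖ = r := by simpa using hx
  refine ⟨mem_sphere_zero_iff_norm.2 ?_, ?_⟩
  · have hsq := norm_add_sq_eq_norm_sq_add_norm_sq_real (x := a • w) (y := (x : E))
      (by rw [real_inner_smul_left, hwx, mul_zero])
    rw [hxr, norm_smul, Real.norm_eq_abs] at hsq
    have hc' : |a| * ‖w‖ * (|a| * ‖w‖) = c ^ 2 / ‖w‖ ^ 2 := by
      rw [mul_mul_mul_comm, abs_mul_abs_self]; simp only [a]; field_simp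
    refine (pow_eq_one_iff_of_nonneg (norm_nonneg _) two_ne_zero).1 ?_
    rw [sq, hsq, hc', ← sq r, hr2, add_sub_cancel]
  · show ⟪w, a • w + (x : E)⟫ = c
    rw [inner_add_right, real_inner_smul_right, hwx, real_inner_self_eq_norm_sq, add_zero,
      div_mul_cancel₀ _ hw2.ne']

end InnerProductSpace

theorem IsCodimOneSphere.isClosed {m : ℕ} {S : Set (Euc m)} (hS : IsCodimOneSphere m S) :
    IsClosed S := by
  obtain ⟨H, -, rfl, -⟩ := hS
  exact isClosed_sphere.inter H.closed_of_finiteDimensional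

theorem IsCodimOneSphere.hausdorffEDist_ne_top {m : ℕ} {S T : Set (Euc m)}
    (hS : IsCodimOneSphere m S) (hT : IsCodimOneSphere m T) : hausdorffEDist S T ≠ ⊤ := by
  obtain ⟨H, -, rfl, hSinf⟩ := hS
  obtain ⟨H', -, rfl, hTinf⟩ := hT
  exact hausdorffEDist_ne_top_of_nonempty_of_bounded hSinf.nonempty hTinf.nonempty
    (isBounded_sphere.subset inter_subset_left) (isBounded_sphere.subset inter_subset_left)

theorem isCodimOneSphere_inter_hyperplane {m : ℕ} (hm : 2 ≤ m) {w : Euc m} {c : ℝ}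
    (hc : c ^ 2 < ‖w‖ ^ 2) : IsCodimOneSphere m (unitSphere m ∩ {y | ⟪w, y⟫ = c}) := by
  have hw : w ≠ 0 := by rintro rfl; nlinarith [norm_zero (E := Euc m)]
  refine ⟨AffineSubspace.mk' ((c / ‖w‖ ^ 2) • w) (ℝ ∙ w)ᗮ, ?_,
    by rw [coe_mk'_orthogonal_span_singleton hw], ?_⟩
  · have : Fact (finrank ℝ (Euc m) = m + 1) := ⟨finrank_euclideanSpace_fin⟩
    rw [AffineSubspace.direction_mk', Submodule.finrank_orthogonal_span_singleton (n := m) hw]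
  · exact infinite_sphere_inter_hyperplane (by rw [finrank_euclideanSpace_fin]; omega) hc

theorem no_dense_orbit_of_doublyStable_general
    (n m : ℕ) (hm : 2 ≤ m)
    (Λ : Set (Euc n)) (hne : Λ.Nonempty) (hΛsub : Λ ⊆ unitSphere n)
    (hΛcl : IsClosed Λ) (hds : DoublyStable n Λ)
    (f : Euc n → Euc m) (hfc : ContinuousOn f Λ) (hfi : Set.InjOn f Λ)
    (hfm : Set.MapsTo f Λ (unitSphere m)) (hfne : f '' Λ ≠ unitSphere m) :
    ∃ (C : Set (Euc n)) (S : Set (Euc m)) (ξ : Euc n),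
      IsCircle n C ∧ IsCodimOneSphere m S ∧ ξ ∈ Λ ∧ ξ ∈ C ∧ f ξ ∈ S ∧
      ¬ ∃ (Ck : ℕ → Set (Euc n)) (Sk : ℕ → Set (Euc m)),
          (∀ k, IsCircle n (Ck k)) ∧ (∀ k, (Ck k ∩ Λ).Nonempty) ∧
          (∀ k, IsCodimOneSphere m (Sk k)) ∧ (∀ k, f '' (Ck k ∩ Λ) ⊆ Sk k) ∧
          SetsConvergeTo Ck C ∧ SetsConvergeTo Sk S := by
  have hΛcpt : IsCompact Λ :=
    isCompact_of_isClosed_isBounded hΛcl (isBounded_sphere.subset hΛsub)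
  obtain ⟨q, hq, hqK⟩ := exists_of_ssubset (hfm.image_subset.ssubset_of_ne hfne)
  obtain ⟨_, ⟨ξ, hξ, rfl⟩, w, hc, hexposed⟩ := exists_strictlyExposed_of_subset_sphere
    (hΛcpt.image_of_continuousOn hfc) hfm.image_subset
    ((hds.nontrivial hΛcl hne).image_of_injOn hfi) hq hqK
  obtain ⟨C, hC, hξC, hCstable⟩ := hds ξ hξ
  have hS := isCodimOneSphere_inter_hyperplane hm hc
  refine ⟨C, _, ξ, hC, hS, hξ, hξC, ⟨hfm hξ, rfl⟩, ?_⟩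
  rintro ⟨Ck, Sk, hCk, -, hSk, hfSk, hCconv, hSconv⟩
  obtain ⟨x, hx, y, hy, hxy⟩ := hCstable Ck hCk hCconv
  have hlimΛ := setLimsup_subset_of_isClosed hΛcl fun k => inter_subset_right (s := Ck k)
  have hlimS := mapsTo_setLimsup_of_setsConvergeTo hΛcl hfc (fun k => inter_subset_right)
    hS.isClosed (fun k => (hSk k).hausdorffEDist_ne_top hS) hSconv hfSk
  have hlim_eq : ∀ z ∈ setLimsup fun k => Ck k ∩ Λ, f z = f ξ := fun z hz =>
    by_contra fun hzξ => (hexposed _ (mem_image_of_mem f (hlimΛ hz)) hzξ).ne (hlimS hz).2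
  exact hxy (hfi (hlimΛ hx) (hlimΛ hy) ((hlim_eq x hx).trans (hlim_eq y hy).symm))

/-- Group-free form of Theorem 4.1: for `Λ ⊆ S^n` nonempty closed doubly stable and
`f : Λ → S^m` continuous injective with `f(Λ) ≠ S^m`, there are a circle `C`, a
codimension-one sphere `S` and `ξ ∈ Λ ∩ C` with `f ξ ∈ S` such that no sequence of
pairs `(C_k, S_k)` with `C_k ∩ Λ ≠ ∅` and `f(C_k ∩ Λ) ⊆ S_k` converges to `(C, S)`. -/
theorem no_dense_orbit_of_doublyStable
    (n m : ℕ) (hn : 2 ≤ n) (hm : 2 ≤ m)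
    (Λ : Set (Euc n)) (hne : Λ.Nonempty) (hΛsub : Λ ⊆ unitSphere n)
    (hΛcl : IsClosed Λ) (hds : DoublyStable n Λ)
    (f : Euc n → Euc m) (hfc : ContinuousOn f Λ) (hfi : Set.InjOn f Λ)
    (hfm : Set.MapsTo f Λ (unitSphere m)) (hfne : f '' Λ ≠ unitSphere m) :
    ∃ (C : Set (Euc n)) (S : Set (Euc m)) (ξ : Euc n),
      IsCircle n C ∧ IsCodimOneSphere m S ∧ ξ ∈ Λ ∧ ξ ∈ C ∧ f ξ ∈ S ∧
      ¬ ∃ (Ck : ℕ → Set (Euc n)) (Sk : ℕ → Set (Euc m)),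
          (∀ k, IsCircle n (Ck k)) ∧ (∀ k, (Ck k ∩ Λ).Nonempty) ∧
          (∀ k, IsCodimOneSphere m (Sk k)) ∧ (∀ k, f '' (Ck k ∩ Λ) ⊆ Sk k) ∧
          SetsConvergeTo Ck C ∧ SetsConvergeTo Sk S :=
  no_dense_orbit_of_doublyStable_general n m hm Λ hne hΛsub hΛcl hds f hfc hfi hfm hfne
end
end

section
/- Let m ≥ 2 and let K be a nonempty compact subset of S^m with K ≠ S^m. Then there exists a codimension-one sphere S in S^m such that S ∩ K is a singleton. (This is the first step of the proof of the paper's Theorem 4.1: a minimal spherical cap centered at a suitable point contains K, and a sphere tangent to this cap at a farthest point of K meets K in exactly one point.) -/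
/-!
Pick `y ∈ Sᵐ ∖ K` and let `p ∈ K` maximise `⟪y, ·⟫` on `K`, i.e. be a point of `K` closest to `y`.
The hyperplane through `p` with normal `y + p` meets `Sᵐ` in a sphere that touches the cap
`{x | ⟪y, x⟫ ≤ ⟪y, p⟫} ⊇ K` only at `p`. This sphere is infinite (it is connected, as `m ≥ 2`) as
soon as `y` and `p` are linearly independent; otherwise `y = -p`, so `K = {p}` and any direction
independent of `p` can replace `y`.
-/

open Metric Set

noncomputable section

open RealInnerProductSpace

theorem sphere_zero_infinite {F : Type*} [NormedAddCommGroup F] [NormedSpace ℝ F]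
    (hF : 1 < Module.rank ℝ F) {r : ℝ} (hr : 0 < r) : (sphere (0 : F) r).Infinite := by
  have : Nontrivial F := rank_pos_iff_nontrivial.mp (zero_lt_one.trans hF)
  obtain ⟨z, hz⟩ := (NormedSpace.sphere_nonempty (x := (0 : F))).mpr hr.le
  have hz_ne_neg : z ≠ -z := fun h => ne_zero_of_mem_sphere hr.ne' ⟨z, hz⟩ <| by
    have : (2 : ℝ) • z = 0 := by rw [two_smul]; nth_rewrite 2 [h]; exact add_neg_cancel z
    simpa using this
  exact (isConnected_sphere hF 0 hr.le).isPreconnected.infinite_of_nontrivial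
    ⟨z, hz, -z, by simpa using hz, hz_ne_neg⟩

section InnerProductSpace

variable {E : Type*} [NormedAddCommGroup E] [InnerProductSpace ℝ E]

theorem eq_of_one_le_inner {x y : E} (hx : ‖x‖ = 1) (hy : ‖y‖ = 1) (h : 1 ≤ ⟪x, y⟫) :
    x = y :=
  (inner_eq_one_iff_of_norm_eq_one hx hy).mp
    (le_antisymm (real_inner_le_one_of_norm_eq_one hx hy) h)

/-- The intersection is the sphere of `p + W` through `p` centred at the foot `p - P_W p` of the
perpendicular from the origin. -/
theorem sphere_inter_mk'_infinite (W : Submodule ℝ E) [W.HasOrthogonalProjection]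
    (hW : 1 < Module.rank ℝ W) {p : E} (hp : p ∉ Wᗮ) :
    (sphere (0 : E) ‖p‖ ∩ (AffineSubspace.mk' p W : Set E)).Infinite := by
  set q := W.starProjection p
  set o := p - q
  have ho : o ∈ Wᗮ := W.sub_starProjection_mem_orthogonal p
  have hq : q ≠ 0 := fun h => hp (W.starProjection_apply_eq_zero_iff.mp h)
  have hmaps : MapsTo (fun z : W => o + z) (sphere 0 ‖q‖)
      (sphere (0 : E) ‖p‖ ∩ (AffineSubspace.mk' p W : Set E)) := by
    intro z hz
    rw [mem_sphere_zero_iff_norm, Submodule.coe_norm] at hz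
    refine ⟨?_, ?_⟩
    · have hpyth : ∀ w ∈ W, ‖o + w‖ * ‖o + w‖ = ‖o‖ * ‖o‖ + ‖w‖ * ‖w‖ := fun w hw =>
        norm_add_sq_eq_norm_sq_add_norm_sq_real (Submodule.inner_left_of_mem_orthogonal hw ho)
      rw [mem_sphere_zero_iff_norm, ← mul_self_inj (norm_nonneg _) (norm_nonneg _)]
      calc ‖o + z‖ * ‖o + z‖ = ‖o‖ * ‖o‖ + ‖q‖ * ‖q‖ := by rw [hpyth z z.2, hz]
        _ = ‖p‖ * ‖p‖ := by rw [← hpyth q (W.starProjection_apply_mem p), sub_add_cancel]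
    · show o + z ∈ AffineSubspace.mk' p W
      rw [AffineSubspace.mem_mk', vsub_eq_sub, show o + z - p = (z : E) - q by simp only [o]; abel]
      exact W.sub_mem z.2 (W.starProjection_apply_mem p)
  exact ((sphere_zero_infinite hW (norm_pos_iff.mpr hq)).image
    (fun a _ b _ h => Subtype.ext (add_left_cancel h))).mono hmaps.image_subset

/-- For `x` in the intersection, `⟪p, x⟫ - 1 = ⟪u, p - x⟫ ≥ 0`. -/
theorem sphere_inter_mk'_inter_eq_singleton {K : Set E} (hKsub : K ⊆ sphere 0 1) {u p : E}
    (hp : p ∈ K) (hmax : IsMaxOn (fun x => ⟪u, x⟫) K p) :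
    sphere 0 1 ∩ (AffineSubspace.mk' p (ℝ ∙ (u + p))ᗮ : Set E) ∩ K = {p} := by
  refine subset_antisymm ?_
    (singleton_subset_iff.mpr ⟨⟨hKsub hp, AffineSubspace.self_mem_mk' p _⟩, hp⟩)
  rintro x ⟨⟨hx, hxH⟩, hxK⟩
  have hp1 : ‖p‖ = 1 := mem_sphere_zero_iff_norm.mp (hKsub hp)
  have hx1 : ‖x‖ = 1 := mem_sphere_zero_iff_norm.mp hx
  have hperp : ⟪u + p, x - p⟫ = 0 :=
    Submodule.mem_orthogonal_singleton_iff_inner_right.mp (AffineSubspace.mem_mk'.mp hxH)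
  have hux : ⟪u, x⟫ ≤ ⟪u, p⟫ := isMaxOn_iff.mp hmax x hxK
  rw [inner_add_left, inner_sub_right, inner_sub_right, real_inner_self_eq_norm_sq, hp1] at hperp
  exact (eq_of_one_le_inner hp1 hx1 (by linarith)).symm

theorem exists_isMaxOn_inner_linearIndependent (hE : 1 < Module.rank ℝ E) {K : Set E}
    (hKc : IsCompact K) (hK : K.Nonempty) (hKsub : K ⊆ sphere 0 1) (hKne : K ≠ sphere 0 1) :
    ∃ u, ∃ p ∈ K, IsMaxOn (fun x => ⟪u, x⟫) K p ∧ LinearIndependent ℝ ![p, u] := by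
  obtain ⟨y, hy, hyK⟩ := exists_of_ssubset (hKsub.ssubset_of_ne hKne)
  obtain ⟨p, hpK, hmax⟩ :=
    hKc.exists_isMaxOn hK (by fun_prop : Continuous fun x => ⟪y, x⟫).continuousOn
  by_cases hpy : LinearIndependent ℝ ![p, y]
  · exact ⟨y, p, hpK, hmax, hpy⟩
  have hp1 : ‖p‖ = 1 := mem_sphere_zero_iff_norm.mp (hKsub hpK)
  have hp0 : p ≠ 0 := norm_ne_zero_iff.mp (by rw [hp1]; exact one_ne_zero)
  obtain ⟨a, rfl⟩ : ∃ a : ℝ, a • p = y := by simpa [LinearIndependent.pair_iff' hp0] using hpy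
  have ha : |a| = 1 := by simpa [norm_smul, hp1] using hy
  obtain rfl : a = -1 := by
    rcases abs_eq zero_le_one |>.mp ha with rfl | rfl
    · exact absurd (by simpa using hpK) hyK
    · rfl
  -- `p` is a point of `K` closest to its own antipode `y = -p`, so `K = {p}`.
  have hKp : ∀ x ∈ K, x = p := fun x hx => by
    have := isMaxOn_iff.mp hmax x hx
    simp only [neg_one_smul, inner_neg_left, real_inner_self_eq_norm_sq, hp1] at this
    exact (eq_of_one_le_inner hp1 (mem_sphere_zero_iff_norm.mp (hKsub hx)) (by linarith)).symm
  obtain ⟨u, hu⟩ := exists_linearIndependent_pair_of_one_lt_rank hE hp0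
  exact ⟨u, p, hpK, isMaxOn_iff.mpr fun x hx => (hKp x hx).symm ▸ le_rfl, hu⟩

end InnerProductSpace

/-- A nonempty compact proper subset `K` of `S^m` is tangentially separated: there is
a codimension-one sphere in `S^m` meeting `K` in exactly one point. -/
theorem exists_codimOneSphere_inter_singleton
    (m : ℕ) (hm : 2 ≤ m) (K : Set (Euc m)) (hK : K.Nonempty)
    (hKc : IsCompact K) (hKsub : K ⊆ unitSphere m) (hKne : K ≠ unitSphere m) :
    ∃ S : Set (Euc m), IsCodimOneSphere m S ∧ ∃ p, S ∩ K = {p} := by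
  have : Fact (Module.finrank ℝ (Euc m) = m + 1) := ⟨by simp⟩
  obtain ⟨u, p, hpK, hmax, hpu⟩ :=
    exists_isMaxOn_inner_linearIndependent (Module.lt_rank_of_lt_finrank (by simp; omega))
      hKc hK hKsub hKne
  have hp : ‖p‖ = 1 := mem_sphere_zero_iff_norm.mp (hKsub hpK)
  have hnormal : LinearIndependent ℝ ![u + p, p] := by
    rwa [LinearIndependent.pair_add_left_iff, LinearIndependent.pair_symm_iff]
  set H := AffineSubspace.mk' p (ℝ ∙ (u + p))ᗮ
  have hu0 : u + p ≠ 0 := hnormal.ne_zero 0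
  have hdim : Module.finrank ℝ (ℝ ∙ (u + p))ᗮ = m :=
    Submodule.finrank_orthogonal_span_singleton hu0
  refine ⟨unitSphere m ∩ H, ⟨H, by rwa [AffineSubspace.direction_mk'], rfl, ?_⟩, p,
    sphere_inter_mk'_inter_eq_singleton hKsub hpK hmax⟩
  have hp_notMem : p ∉ (ℝ ∙ (u + p))ᗮᗮ := by
    simpa [Submodule.mem_span_singleton, LinearIndependent.pair_iff' hu0] using hnormal
  simpa [hp, unitSphere] using sphere_inter_mk'_infinite (ℝ ∙ (u + p))ᗮ
    (Module.lt_rank_of_lt_finrank (by omega)) hp_notMem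
end
end

section
/- Let n ≥ 2 and let Λ ⊆ S^n be a closed subset such that the open set Ω = S^n \ Λ satisfies the weak Koebe–Maskit condition. If (C_k) is a sequence of circles in S^n converging to a circle C and C_k ∩ Λ = ∅ for every k, then there exists a connected component U of Ω with C ⊆ closure(U). (This is the base case in the proof of the paper's Lemma 4.5: circles disjoint from Λ of definite diameter must eventually lie in a single large component of Ω.) -/
open Metric Set

noncomputable section

/-!
The approximating circles `C_k` are connected subsets of `Ω = S^n \ Λ`, so each lies in a single
component `U_k` of `Ω`. Hausdorff convergence forces `diam U_k ≥ diam C_k` to stay bounded below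
by a multiple of `diam C > 0`, and by WKM only finitely many components are that large, so some
component `U` equals `U_k` for infinitely many `k`. Every point of `C` is a limit of points of
those `C_k ⊆ U`, hence `C ⊆ closure U`.
-/

open Filter Bornology

section SphereInterAffineSubspace

variable {V P : Type*} [NormedAddCommGroup V] [InnerProductSpace ℝ V] [MetricSpace P]
  [NormedAddTorsor V P]

open EuclideanGeometry

/-- By Pythagoras, on `s` the distance to `c` is a function of the distance to the foot of the
perpendicular from `c`. -/
lemma sphere_inter_affineSubspace_eq (s : AffineSubspace ℝ P) [Nonempty s]
    [s.direction.HasOrthogonalProjection] {c x₀ : P} {r : ℝ} (hx₀ : x₀ ∈ sphere c r ∩ s) :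
    sphere c r ∩ s =
      sphere (orthogonalProjection s c : P)
        (dist x₀ (orthogonalProjection s c)) ∩ s := by
  have pythag (x : P) (hx : x ∈ s) :=
    dist_sq_eq_dist_orthogonalProjection_sq_add_dist_orthogonalProjection_sq c hx
  have hr : r = dist x₀ c := hx₀.1.symm
  subst hr
  ext x
  simp only [mem_inter_iff, Metric.mem_sphere, SetLike.mem_coe, and_congr_left_iff]
  intro hx
  rw [← mul_self_inj dist_nonneg dist_nonneg, ← mul_self_inj dist_nonneg dist_nonneg,
    pythag x hx, pythag x₀ hx₀.2, add_left_inj]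

lemma sphere_inter_affineSubspace_eq_image {s : AffineSubspace ℝ P} {q : P} (hq : q ∈ s)
    (ρ : ℝ) : sphere q ρ ∩ s = (fun v : s.direction => (v : V) +ᵥ q) '' sphere 0 ρ := by
  ext x
  constructor
  · rintro ⟨hxq, hx⟩
    refine ⟨⟨x -ᵥ q, AffineSubspace.vsub_mem_direction hx hq⟩, ?_, vsub_vadd x q⟩
    simpa [dist_eq_norm_vsub V] using hxq
  · rintro ⟨v, hv, rfl⟩
    refine ⟨?_, AffineSubspace.vadd_mem_of_mem_direction v.2 hq⟩
    simpa [dist_eq_norm_vsub V] using hv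

lemma isPreconnected_sphere_inter_affineSubspace {s : AffineSubspace ℝ P}
    [s.direction.HasOrthogonalProjection] (hs : 1 < Module.rank ℝ s.direction) (c : P)
    (r : ℝ) : IsPreconnected (sphere c r ∩ s) := by
  rcases (sphere c r ∩ (s : Set P)).eq_empty_or_nonempty with h | ⟨x₀, hx₀⟩
  · rw [h]; exact isPreconnected_empty
  have : Nonempty s := ⟨⟨x₀, hx₀.2⟩⟩
  rw [sphere_inter_affineSubspace_eq s hx₀,
    sphere_inter_affineSubspace_eq_image (orthogonalProjection_mem c)]
  exact (isPreconnected_sphere hs 0 _).image _ (by fun_prop)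

end SphereInterAffineSubspace

lemma IsCircle.subset_unitSphere_s6 {n : ℕ} {C : Set (Euc n)} (hC : IsCircle n C) :
    C ⊆ unitSphere n := by
  obtain ⟨P, -, rfl, -⟩ := hC
  exact inter_subset_left

lemma IsCircle.infinite_s6 {n : ℕ} {C : Set (Euc n)} (hC : IsCircle n C) : C.Infinite :=
  hC.choose_spec.2.2

lemma IsCircle.isConnected {n : ℕ} {C : Set (Euc n)} (hC : IsCircle n C) : IsConnected C := by
  refine ⟨hC.infinite_s6.nonempty, ?_⟩
  obtain ⟨P, hdim, rfl, -⟩ := hC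
  have hrank : 1 < Module.rank ℝ P.direction := by
    rw [← Module.finrank_eq_rank, hdim]; norm_num
  exact isPreconnected_sphere_inter_affineSubspace hrank 0 1

namespace SetsConvergeTo

variable {X : Type*} [MetricSpace X] {K : ℕ → Set X} {L : Set X}

lemma eventually_exists_dist_lt_s6 (hconv : SetsConvergeTo K L) (hKne : ∀ k, (K k).Nonempty)
    (hKb : ∀ k, IsBounded (K k)) (hLb : IsBounded L) {x : X} (hx : x ∈ L) {ε : ℝ}
    (hε : 0 < ε) : ∀ᶠ k in atTop, ∃ y ∈ K k, dist x y < ε := by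
  filter_upwards [hconv.eventually_lt_const hε] with k hk
  exact exists_dist_lt_of_hausdorffDist_lt hx (by rwa [hausdorffDist_comm])
    (hausdorffEDist_ne_top_of_nonempty_of_bounded ⟨x, hx⟩ (hKne k) hLb (hKb k))

lemma eventually_lt_diam (hconv : SetsConvergeTo K L) (hKne : ∀ k, (K k).Nonempty)
    (hKb : ∀ k, IsBounded (K k)) (hLb : IsBounded L) {a b : X} (ha : a ∈ L) (hb : b ∈ L)
    {t : ℝ} (ht : t < dist a b) : ∀ᶠ k in atTop, t < diam (K k) := by
  have hε : 0 < (dist a b - t) / 2 := by linarith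
  filter_upwards [hconv.eventually_exists_dist_lt_s6 hKne hKb hLb ha hε,
    hconv.eventually_exists_dist_lt_s6 hKne hKb hLb hb hε] with k ⟨a', ha', haa'⟩ ⟨b', hb', hbb'⟩
  calc t < dist a b - dist a a' - dist b b' := by linarith
    _ ≤ dist a' b' := by linarith [dist_triangle4 a a' b' b, dist_comm b b']
    _ ≤ diam (K k) := dist_le_diam_of_mem (hKb k) ha' hb'

end SetsConvergeTo

theorem WKM.exists_subset_closure_connectedComponentIn {X : Type*} [MetricSpace X]
    {Ω : Set X} (hΩb : IsBounded Ω) (hWKM : WKM Ω) {K : ℕ → Set X} {L : Set X}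
    (hconv : SetsConvergeTo K L) (hK : ∀ k, IsPreconnected (K k)) (hKΩ : ∀ k, K k ⊆ Ω)
    (hKne : ∀ k, (K k).Nonempty) (hL : L.Nontrivial) (hLb : IsBounded L) :
    ∃ x ∈ Ω, L ⊆ closure (connectedComponentIn Ω x) := by
  have hKb (k : ℕ) : IsBounded (K k) := hΩb.subset (hKΩ k)
  choose x hx using hKne
  have hKne (k : ℕ) : (K k).Nonempty := ⟨x k, hx k⟩
  set U : ℕ → Set X := fun k => connectedComponentIn Ω (x k)
  have hKU (k : ℕ) : K k ⊆ U k := (hK k).subset_connectedComponentIn (hx k) (hKΩ k)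
  obtain ⟨a, ha, b, hb, hab⟩ := hL
  have ht : 0 < dist a b / 2 := by linarith [dist_pos.2 hab]
  set large : Set (Set X) :=
    {V | (∃ y ∈ Ω, V = connectedComponentIn Ω y) ∧ dist a b / 2 < diam V}
  have hU_large : ∀ᶠ k in atTop, U k ∈ large := by
    filter_upwards [hconv.eventually_lt_diam hKne hKb hLb ha hb (t := dist a b / 2)
      (by linarith)] with k hk
    exact ⟨⟨x k, hKΩ k (hx k), rfl⟩, hk.trans_le
      (diam_mono (hKU k) (hΩb.subset (connectedComponentIn_subset Ω (x k))))⟩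
  have hU_freq : ∃ᶠ k in atTop, ∃ V ∈ large, U k = V :=
    hU_large.frequently.mono fun k hk => ⟨U k, hk, rfl⟩
  obtain ⟨V, ⟨⟨y, hy, rfl⟩, -⟩, hfreq⟩ := (hWKM _ ht).frequently_exists.1 hU_freq
  refine ⟨y, hy, fun ξ hξ => Metric.mem_closure_iff.2 fun δ hδ => ?_⟩
  obtain ⟨k, hkV, z, hz, hξz⟩ :=
    (hfreq.and_eventually (hconv.eventually_exists_dist_lt_s6 hKne hKb hLb hξ hδ)).exists
  exact ⟨z, hkV ▸ hKU k hz, hξz⟩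

theorem circle_subset_closure_component_of_disjoint_general
    (n : ℕ) (Λ : Set (Euc n)) (hWKM : WKM (unitSphere n \ Λ))
    (C : Set (Euc n)) (hC : IsCircle n C)
    (Ck : ℕ → Set (Euc n)) (hCk : ∀ k, IsCircle n (Ck k))
    (hconv : SetsConvergeTo Ck C) (hdisj : ∀ k, Ck k ∩ Λ = ∅) :
    ∃ x ∈ unitSphere n \ Λ,
      C ⊆ closure (connectedComponentIn (unitSphere n \ Λ) x) := by
  have hCkΩ (k : ℕ) : Ck k ⊆ unitSphere n \ Λ := fun z hz =>
    ⟨(hCk k).subset_unitSphere_s6 hz, fun hzΛ => (hdisj k).subset ⟨hz, hzΛ⟩⟩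
  exact hWKM.exists_subset_closure_connectedComponentIn (isBounded_sphere.subset sdiff_subset)
    hconv (fun k => (hCk k).isConnected.isPreconnected) hCkΩ
    (fun k => (hCk k).infinite_s6.nonempty) hC.infinite_s6.nontrivial
    (isBounded_sphere.subset hC.subset_unitSphere_s6)

/-- Base case of Lemma 4.5: if circles `C_k` disjoint from `Λ` converge to a circle
`C`, and `Ω = S^n \ Λ` satisfies WKM, then `C` is contained in the closure of a
single connected component of `Ω`. -/
theorem circle_subset_closure_component_of_disjoint
    (n : ℕ) (hn : 2 ≤ n) (Λ : Set (Euc n)) (hΛsub : Λ ⊆ unitSphere n)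
    (hΛcl : IsClosed Λ) (hWKM : WKM (unitSphere n \ Λ))
    (C : Set (Euc n)) (hC : IsCircle n C)
    (Ck : ℕ → Set (Euc n)) (hCk : ∀ k, IsCircle n (Ck k))
    (hconv : SetsConvergeTo Ck C) (hdisj : ∀ k, Ck k ∩ Λ = ∅) :
    ∃ x ∈ unitSphere n \ Λ,
      C ⊆ closure (connectedComponentIn (unitSphere n \ Λ) x) :=
  circle_subset_closure_component_of_disjoint_general n Λ hWKM C hC Ck hCk hconv hdisj
end
end

section
/- Let n ≥ 2, let ξ ∈ S^n, let v ∈ ℝ^{n+1} be a unit vector with ⟨v, ξ⟩ = 0, and let z ∈ S^n with z ≠ ξ. Let (b_k) and (c_k) be sequences in S^n such that for every k the points z, b_k, c_k are pairwise distinct, b_k → ξ, c_k → ξ, and (c_k − b_k)/‖c_k − b_k‖ → v as k → ∞. Let C_k be the unique circle in S^n through z, b_k, c_k. Then C_k converges (in Hausdorff distance) to the unique circle C in S^n through z and ξ to which v is tangent at ξ. (This is the convergence claim 'C_k converges to the unique circle passing through z₁ and tangent to v₁, which must be C' in the proof of the paper's Theorem 3.1.) -/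
open Metric Set

noncomputable section

/-- `v` is tangent to the circle `C` at `ξ`: writing `C` as the sphere of radius
`ρ > 0` about the center `o` inside the 2-plane `P`, the vector `v` lies in the
direction of `P` and is orthogonal to `ξ − o`. -/
def IsTangentAt (n : ℕ) (v : Euc n) (C : Set (Euc n)) (ξ : Euc n) : Prop :=
  ∃ (P : AffineSubspace ℝ (Euc n)) (o : Euc n) (ρ : ℝ),
    Module.finrank ℝ P.direction = 2 ∧ o ∈ P ∧ 0 < ρ ∧
    C = {x : Euc n | x ∈ P ∧ ‖x - o‖ = ρ} ∧
    v ∈ P.direction ∧ inner ℝ v (ξ - o) = (0 : ℝ)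

/-!
A circle of the unit sphere through `z` whose plane has the orthonormal frame `e₁, e₂` is the
image of the unit circle under `(s, t) ↦ o + s • r e₁ + t • r e₂`, where
`o = z - ⟪z, e₁⟫ e₁ - ⟪z, e₂⟫ e₂` is the foot of the perpendicular from the origin to the plane
and `r = √(1 - ‖o‖²)`. The Hausdorff distance between two such images is at most the sum of the
distances between the data `o, r e₁, r e₂`, so the circle depends continuously on the frame.
For `C_k` take the Gram–Schmidt frame of `b_k - z, (c_k - b_k)/‖c_k - b_k‖`, and for `C` that of
`ξ - z, v`: these pairs converge, and Gram–Schmidt is continuous at the limit because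
`⟪v, ξ⟫ = 0 < ⟪ξ - z, ξ⟫` makes `ξ - z, v` independent. Tangency puts `v` in the plane of `C`,
since an infinite subset of a sphere lies in at most one 2-dimensional affine subspace.
-/

open Filter Topology Module
open scoped RealInnerProductSpace

theorem AffineSubspace.eq_mk'_span_pair_of_finrank_eq_two {k V P : Type*} [DivisionRing k]
    [AddCommGroup V] [Module k V] [AddTorsor V P] {Q : AffineSubspace k P} {p : P} {v₁ v₂ : V}
    (hQ : finrank k Q.direction = 2) (hp : p ∈ Q) (hv₁ : v₁ ∈ Q.direction)
    (hv₂ : v₂ ∈ Q.direction) (hv : LinearIndependent k ![v₁, v₂]) :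
    Q = AffineSubspace.mk' p (Submodule.span k {v₁, v₂}) := by
  have : FiniteDimensional k Q.direction := Module.finite_of_finrank_pos (by omega)
  have hspan : Submodule.span k {v₁, v₂} = Q.direction := by
    refine Submodule.eq_of_le_of_finrank_eq
      (Submodule.span_le.2 (insert_subset hv₁ (singleton_subset_iff.2 hv₂))) ?_
    rw [hQ, ← Matrix.range_cons_cons_empty v₁ v₂ ![], finrank_span_eq_card hv, Fintype.card_fin]
  exact AffineSubspace.ext_of_direction_eq (by rw [AffineSubspace.direction_mk', hspan])
    ⟨p, hp, AffineSubspace.self_mem_mk' _ _⟩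

theorem AffineIndependent.linearIndependent_sub_sub {k V : Type*} [Ring k] [AddCommGroup V]
    [Module k V] {p₁ p₂ p₃ : V} (h : AffineIndependent k ![p₁, p₂, p₃]) :
    LinearIndependent k ![p₂ - p₁, p₃ - p₂] := by
  rw [affineIndependent_iff_linearIndependent_vsub k _ (0 : Fin 3),
    ← linearIndependent_equiv (finSuccAboveEquiv (0 : Fin 3))] at h
  have h' : LinearIndependent k ![p₂ - p₁, p₃ - p₁] := by
    convert h using 1
    ext i
    fin_cases i <;> rfl
  rw [LinearIndependent.pair_iff] at h' ⊢
  intro s t hst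
  have := h' (s - t) t (by simp only [← hst, sub_smul, smul_sub]; abel)
  exact ⟨(sub_eq_zero.1 this.1).trans this.2, this.2⟩

theorem orthonormal_pair_iff {E : Type*} [NormedAddCommGroup E] [InnerProductSpace ℝ E]
    {e₁ e₂ : E} :
    Orthonormal ℝ ![e₁, e₂] ↔ ‖e₁‖ = 1 ∧ ‖e₂‖ = 1 ∧ ⟪e₁, e₂⟫ = 0 := by
  refine ⟨fun he => ⟨by simpa using he.1 0, by simpa using he.1 1,
    by simpa using he.2 (zero_ne_one' (Fin 2))⟩, fun ⟨h₁, h₂, h₁₂⟩ => ?_⟩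
  rw [orthonormal_iff_ite]
  intro i j
  fin_cases i <;> fin_cases j <;> simp [h₁, h₂, h₁₂, real_inner_comm e₁ e₂]

theorem linearIndependent_pair_of_inner {E : Type*} [NormedAddCommGroup E] [InnerProductSpace ℝ E]
    {x y w : E} (hx : ⟪x, w⟫ ≠ 0) (hy : ⟪y, w⟫ = 0) (hy₀ : y ≠ 0) :
    LinearIndependent ℝ ![x, y] := by
  refine LinearIndependent.pair_iff.2 fun s t hst => ?_
  have hs : s = 0 := by
    have := congrArg (⟪·, w⟫) hst
    simp only [inner_add_left, real_inner_smul_left, hy, inner_zero_left] at this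
    simpa [hx] using this
  subst hs
  exact ⟨rfl, (smul_eq_zero.1 (by simpa using hst)).resolve_right hy₀⟩

theorem EuclideanGeometry.Cospherical.affineSpan_eq_of_infinite {V P : Type*}
    [NormedAddCommGroup V] [InnerProductSpace ℝ V] [MetricSpace P] [NormedAddTorsor V P]
    {S : Set P} (hS : EuclideanGeometry.Cospherical S) (hinf : S.Infinite)
    {Q : AffineSubspace ℝ P} (hSQ : S ⊆ Q) (hQ : finrank ℝ Q.direction = 2) :
    affineSpan ℝ S = Q := by
  classical
  have : FiniteDimensional ℝ Q.direction := Module.finite_of_finrank_pos (by omega)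
  obtain ⟨t, htS, ht⟩ := hinf.exists_subset_card_eq 3
  obtain ⟨p₁, p₂, p₃, h₁₂, h₁₃, h₂₃, rfl⟩ := Finset.card_eq_three.1 ht
  have hp : range ![p₁, p₂, p₃] ⊆ S := by
    rintro _ ⟨i, rfl⟩
    fin_cases i <;> exact htS (by simp)
  have hind := hS.affineIndependent_of_mem_of_ne (hp ⟨0, rfl⟩) (hp ⟨1, rfl⟩) (hp ⟨2, rfl⟩)
    h₁₂ h₁₃ h₂₃
  have hspan := hind.affineSpan_eq_of_le_of_card_eq_finrank_add_one
    ((affineSpan_mono ℝ hp).trans (affineSpan_le.2 hSQ)) (by simp [hQ])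
  exact le_antisymm (affineSpan_le.2 hSQ) (hspan ▸ affineSpan_mono ℝ hp)

theorem NormedSpace.continuousAt_normalize {V : Type*} [NormedAddCommGroup V] [NormedSpace ℝ V]
    {x : V} (hx : x ≠ 0) : ContinuousAt NormedSpace.normalize x :=
  (continuousAt_id.norm.inv₀ (norm_ne_zero_iff.2 hx)).smul continuousAt_id

namespace SphereCircle

section Ellipse

variable {E : Type*} [NormedAddCommGroup E] [NormedSpace ℝ E]

def ellipse (o p q : E) : Set E := {x | ∃ s t : ℝ, s ^ 2 + t ^ 2 = 1 ∧ x = o + s • p + t • q}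

theorem mem_ellipse_smul_iff {o p q x : E} {r : ℝ} (hr : 0 ≤ r) :
    x ∈ ellipse o (r • p) (r • q) ↔ ∃ a b : ℝ, a ^ 2 + b ^ 2 = r ^ 2 ∧ x = o + a • p + b • q := by
  constructor
  · rintro ⟨s, t, hst, rfl⟩
    exact ⟨r * s, r * t, by linear_combination r ^ 2 * hst, by simp only [smul_smul, mul_comm]⟩
  · rintro ⟨a, b, hab, rfl⟩
    rcases hr.eq_or_lt with rfl | hr
    · obtain ⟨rfl, rfl⟩ : a = 0 ∧ b = 0 := by constructor <;> nlinarith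
      exact ⟨1, 0, by norm_num, by simp⟩
    · refine ⟨a / r, b / r, ?_, ?_⟩
      · field_simp; linarith
      · simp only [smul_smul, div_mul_cancel₀ _ hr.ne']

theorem exists_mem_ellipse_dist_le {o p q : E} (o' p' q' : E) {x : E} (hx : x ∈ ellipse o p q) :
    ∃ y ∈ ellipse o' p' q', dist x y ≤ ‖o - o'‖ + ‖p - p'‖ + ‖q - q'‖ := by
  obtain ⟨s, t, hst, rfl⟩ := hx
  refine ⟨o' + s • p' + t • q', ⟨s, t, hst, rfl⟩, ?_⟩
  have hs : |s| ≤ 1 := sq_le_one_iff_abs_le_one s |>.1 (by nlinarith)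
  have ht : |t| ≤ 1 := sq_le_one_iff_abs_le_one t |>.1 (by nlinarith)
  calc dist (o + s • p + t • q) (o' + s • p' + t • q')
      = ‖(o - o') + s • (p - p') + t • (q - q')‖ := by rw [dist_eq_norm]; congr 1; module
    _ ≤ ‖o - o'‖ + |s| * ‖p - p'‖ + |t| * ‖q - q'‖ := by
        grw [norm_add₃_le, norm_smul, norm_smul, Real.norm_eq_abs, Real.norm_eq_abs]
    _ ≤ ‖o - o'‖ + ‖p - p'‖ + ‖q - q'‖ := by
        gcongr <;> apply mul_le_of_le_one_left (norm_nonneg _) <;> assumption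

theorem hausdorffDist_ellipse_le (o p q o' p' q' : E) :
    hausdorffDist (ellipse o p q) (ellipse o' p' q') ≤ ‖o - o'‖ + ‖p - p'‖ + ‖q - q'‖ := by
  refine hausdorffDist_le_of_mem_dist (by positivity)
    (fun _ hx => exists_mem_ellipse_dist_le o' p' q' hx) fun _ hy => ?_
  rw [norm_sub_rev o, norm_sub_rev p, norm_sub_rev q]
  exact exists_mem_ellipse_dist_le o p q hy

theorem tendsto_hausdorffDist_ellipse {ι : Type*} {l : Filter ι} {o p q : ι → E} {o₀ p₀ q₀ : E}
    (ho : Tendsto o l (𝓝 o₀)) (hp : Tendsto p l (𝓝 p₀)) (hq : Tendsto q l (𝓝 q₀)) :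
    Tendsto (fun i => hausdorffDist (ellipse (o i) (p i) (q i)) (ellipse o₀ p₀ q₀)) l (𝓝 0) := by
  rw [tendsto_iff_norm_sub_tendsto_zero] at ho hp hq
  refine squeeze_zero (fun _ => hausdorffDist_nonneg)
    (fun i => hausdorffDist_ellipse_le _ _ _ _ _ _) ?_
  simpa using (ho.add hp).add hq

end Ellipse

section Frame

variable {E : Type*} [NormedAddCommGroup E] [InnerProductSpace ℝ E]

def frameCenter (z e₁ e₂ : E) : E := z - ⟪z, e₁⟫ • e₁ - ⟪z, e₂⟫ • e₂

def frameRadius (z e₁ e₂ : E) : ℝ := √(1 - ‖frameCenter z e₁ e₂‖ ^ 2)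

def frameCircle (z e₁ e₂ : E) : Set E :=
  ellipse (frameCenter z e₁ e₂) (frameRadius z e₁ e₂ • e₁) (frameRadius z e₁ e₂ • e₂)

theorem tendsto_hausdorffDist_frameCircle {ι : Type*} {l : Filter ι} (z : E) {e₁ e₂ : ι → E}
    {f₁ f₂ : E} (h₁ : Tendsto e₁ l (𝓝 f₁)) (h₂ : Tendsto e₂ l (𝓝 f₂)) :
    Tendsto (fun i => hausdorffDist (frameCircle z (e₁ i) (e₂ i)) (frameCircle z f₁ f₂)) l
      (𝓝 0) := by
  have hc : Tendsto (fun i => frameCenter z (e₁ i) (e₂ i)) l (𝓝 (frameCenter z f₁ f₂)) :=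
    ((tendsto_const_nhds (x := z)).sub ((tendsto_const_nhds.inner h₁).smul h₁)).sub
      ((tendsto_const_nhds.inner h₂).smul h₂)
  have hr : Tendsto (fun i => frameRadius z (e₁ i) (e₂ i)) l (𝓝 (frameRadius z f₁ f₂)) :=
    (tendsto_const_nhds.sub (hc.norm.pow 2)).sqrt
  exact tendsto_hausdorffDist_ellipse hc (hr.smul h₁) (hr.smul h₂)

variable {e₁ e₂ : E} (he : Orthonormal ℝ ![e₁, e₂])
include he

theorem norm_frameCenter_add_smul_add_smul_sq (z : E) (a b : ℝ) :
    ‖frameCenter z e₁ e₂ + a • e₁ + b • e₂‖ ^ 2 = ‖frameCenter z e₁ e₂‖ ^ 2 + a ^ 2 + b ^ 2 := by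
  obtain ⟨h₁, h₂, h₁₂⟩ := orthonormal_pair_iff.1 he
  have ho₁ : ⟪frameCenter z e₁ e₂, e₁⟫ = 0 := by
    simp [frameCenter, inner_sub_left, real_inner_smul_left, h₁, real_inner_comm e₁ e₂, h₁₂]
  have ho₂ : ⟪frameCenter z e₁ e₂, e₂⟫ = 0 := by
    simp [frameCenter, inner_sub_left, real_inner_smul_left, h₂, h₁₂]
  rw [norm_add_sq_real, norm_add_sq_real]
  simp [inner_add_left, real_inner_smul_left, real_inner_smul_right, norm_smul, ho₁, ho₂, h₁, h₂,
    h₁₂]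

theorem sphere_inter_mk'_span_eq_frameCircle {z : E} (hz : ‖z‖ = 1) :
    sphere (0 : E) 1 ∩ AffineSubspace.mk' z (Submodule.span ℝ {e₁, e₂}) = frameCircle z e₁ e₂ := by
  set o := frameCenter z e₁ e₂
  have hnorm := norm_frameCenter_add_smul_add_smul_sq he z
  have hz_eq : z = o + ⟪z, e₁⟫ • e₁ + ⟪z, e₂⟫ • e₂ := by simp only [o, frameCenter]; abel
  have hr : frameRadius z e₁ e₂ ^ 2 = 1 - ‖o‖ ^ 2 := by
    have := hnorm ⟪z, e₁⟫ ⟪z, e₂⟫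
    rw [← hz_eq, hz] at this
    exact Real.sq_sqrt (by nlinarith)
  have hr₀ : 0 ≤ frameRadius z e₁ e₂ := Real.sqrt_nonneg _
  ext x
  simp only [mem_inter_iff, mem_sphere_zero_iff_norm, SetLike.mem_coe, AffineSubspace.mem_mk',
    vsub_eq_sub, Submodule.mem_span_pair, frameCircle]
  rw [mem_ellipse_smul_iff hr₀]
  constructor
  · rintro ⟨hx, s, t, hst⟩
    have hx_eq : x = o + (s + ⟪z, e₁⟫) • e₁ + (t + ⟪z, e₂⟫) • e₂ := by
      linear_combination (norm := module) hz_eq - hst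
    refine ⟨_, _, ?_, hx_eq⟩
    have := hnorm (s + ⟪z, e₁⟫) (t + ⟪z, e₂⟫)
    rw [← hx_eq, hx] at this
    linarith
  · rintro ⟨a, b, hab, rfl⟩
    refine ⟨?_, a - ⟪z, e₁⟫, b - ⟪z, e₂⟫, by linear_combination (norm := module) hz_eq⟩
    have := hnorm a b
    nlinarith [norm_nonneg (o + a • e₁ + b • e₂)]

end Frame

section GramSchmidt

variable {E : Type*} [NormedAddCommGroup E] [InnerProductSpace ℝ E] {u₁ u₂ : E}

def gramSchmidtSnd (u₁ u₂ : E) : E :=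
  NormedSpace.normalize (u₂ - ⟪u₂, NormedSpace.normalize u₁⟫ • NormedSpace.normalize u₁)

theorem sub_inner_normalize_smul_ne_zero (hu : LinearIndependent ℝ ![u₁, u₂]) :
    u₂ - ⟪u₂, NormedSpace.normalize u₁⟫ • NormedSpace.normalize u₁ ≠ 0 := by
  intro h
  refine one_ne_zero
    (LinearIndependent.pair_iff.1 hu (-(⟪u₂, NormedSpace.normalize u₁⟫ * ‖u₁‖⁻¹)) 1 ?_).2
  rw [← h, NormedSpace.normalize]
  module

theorem orthonormal_normalize_gramSchmidtSnd (hu : LinearIndependent ℝ ![u₁, u₂]) :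
    Orthonormal ℝ ![NormedSpace.normalize u₁, gramSchmidtSnd u₁ u₂] := by
  have hu₁ : ‖NormedSpace.normalize u₁‖ = 1 :=
    NormedSpace.norm_normalize_eq_one_iff.2 (hu.ne_zero 0)
  refine orthonormal_pair_iff.2 ⟨hu₁, NormedSpace.norm_normalize_eq_one_iff.2
    (sub_inner_normalize_smul_ne_zero hu), ?_⟩
  set e₁ := NormedSpace.normalize u₁
  rw [gramSchmidtSnd, NormedSpace.normalize, real_inner_smul_right, inner_sub_right,
    real_inner_smul_right, real_inner_self_eq_norm_sq, hu₁, real_inner_comm]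
  ring

/-- The circle cut from the unit sphere by the plane through `z` parallel to `u₁` and `u₂`,
parametrized by the Gram–Schmidt frame of `u₁, u₂`. -/
def sphereCircle (z u₁ u₂ : E) : Set E :=
  frameCircle z (NormedSpace.normalize u₁) (gramSchmidtSnd u₁ u₂)

theorem sphere_inter_eq_sphereCircle {P : AffineSubspace ℝ E} (hP : finrank ℝ P.direction = 2)
    {z : E} (hz : z ∈ sphere (0 : E) 1 ∩ P) (hu₁ : u₁ ∈ P.direction) (hu₂ : u₂ ∈ P.direction)
    (hu : LinearIndependent ℝ ![u₁, u₂]) :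
    sphere (0 : E) 1 ∩ P = sphereCircle z u₁ u₂ := by
  have he := orthonormal_normalize_gramSchmidtSnd hu
  have he₁ : NormedSpace.normalize u₁ ∈ P.direction := P.direction.smul_mem _ hu₁
  have he₂ : gramSchmidtSnd u₁ u₂ ∈ P.direction :=
    P.direction.smul_mem _ (P.direction.sub_mem hu₂ (P.direction.smul_mem _ he₁))
  rw [AffineSubspace.eq_mk'_span_pair_of_finrank_eq_two hP hz.2 he₁ he₂ he.linearIndependent,
    sphereCircle, sphere_inter_mk'_span_eq_frameCircle he (mem_sphere_zero_iff_norm.1 hz.1)]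

theorem tendsto_hausdorffDist_sphereCircle {ι : Type*} {l : Filter ι} (z : E) {u₁ u₂ : ι → E}
    {w₁ w₂ : E} (h₁ : Tendsto u₁ l (𝓝 w₁)) (h₂ : Tendsto u₂ l (𝓝 w₂))
    (hw : LinearIndependent ℝ ![w₁, w₂]) :
    Tendsto (fun i => hausdorffDist (sphereCircle z (u₁ i) (u₂ i)) (sphereCircle z w₁ w₂)) l
      (𝓝 0) := by
  have he₁ : Tendsto (fun i => NormedSpace.normalize (u₁ i)) l (𝓝 (NormedSpace.normalize w₁)) :=
    (NormedSpace.continuousAt_normalize (hw.ne_zero 0)).tendsto.comp h₁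
  have he₂ : Tendsto (fun i => gramSchmidtSnd (u₁ i) (u₂ i)) l (𝓝 (gramSchmidtSnd w₁ w₂)) :=
    (NormedSpace.continuousAt_normalize (sub_inner_normalize_smul_ne_zero hw)).tendsto.comp
      (h₂.sub ((h₂.inner he₁).smul he₁))
  exact tendsto_hausdorffDist_frameCircle z he₁ he₂

end GramSchmidt

theorem sphere_inter_eq_sphereCircle_of_mem {E : Type*} [NormedAddCommGroup E]
    [InnerProductSpace ℝ E] {P : AffineSubspace ℝ E} (hP : finrank ℝ P.direction = 2)
    {z b c : E} (hz : z ∈ sphere (0 : E) 1 ∩ P) (hb : b ∈ sphere (0 : E) 1 ∩ P)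
    (hc : c ∈ sphere (0 : E) 1 ∩ P) (hzb : z ≠ b) (hzc : z ≠ c) (hbc : b ≠ c) :
    sphere (0 : E) 1 ∩ P = sphereCircle z (b - z) (NormedSpace.normalize (c - b)) := by
  have hind : AffineIndependent ℝ ![z, b, c] :=
    EuclideanGeometry.Cospherical.affineIndependent_of_ne
      ⟨0, 1, by rintro p (rfl | rfl | rfl) <;> [exact hz.1; exact hb.1; exact hc.1]⟩ hzb hzc hbc
  have hli := hind.linearIndependent_sub_sub
  refine sphere_inter_eq_sphereCircle hP hz (P.vsub_mem_direction hb.2 hz.2)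
    (P.direction.smul_mem _ (P.vsub_mem_direction hc.2 hb.2)) ?_
  rw [NormedSpace.normalize, ← one_smul ℝ (b - z)]
  exact (LinearIndependent.pair_smul_smul_iff isUnit_one
    (inv_ne_zero (norm_ne_zero_iff.2 (sub_ne_zero.2 hbc.symm))).isUnit).2 hli

end SphereCircle

open SphereCircle

theorem circles_tendsto_tangent_circle_general
    (n : ℕ) (ξ v z : Euc n)
    (hξ : ξ ∈ unitSphere n) (hv : ‖v‖ = 1) (hvξ : inner ℝ v ξ = (0 : ℝ))
    (hz : z ∈ unitSphere n) (hzξ : z ≠ ξ)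
    (b c : ℕ → Euc n)
    (hdist : ∀ k, z ≠ b k ∧ z ≠ c k ∧ b k ≠ c k)
    (hbξ : Filter.Tendsto b Filter.atTop (nhds ξ))
    (hdir : Filter.Tendsto (fun k => ‖c k - b k‖⁻¹ • (c k - b k))
      Filter.atTop (nhds v))
    (Ck : ℕ → Set (Euc n))
    (hCk : ∀ k, IsCircle n (Ck k) ∧ z ∈ Ck k ∧ b k ∈ Ck k ∧ c k ∈ Ck k)
    (C : Set (Euc n)) (hC : IsCircle n C) (hξC : ξ ∈ C) (hzC : z ∈ C)
    (htan : IsTangentAt n v C ξ) :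
    SetsConvergeTo Ck C := by
  have hξ₁ : ‖ξ‖ = 1 := mem_sphere_zero_iff_norm.1 hξ
  have hz₁ : ‖z‖ = 1 := mem_sphere_zero_iff_norm.1 hz
  obtain ⟨P, hP, rfl, hCinf⟩ := hC
  obtain ⟨P', _, _, hP', -, -, hC_eq, hvP', -⟩ := htan
  have hcosph : EuclideanGeometry.Cospherical (unitSphere n ∩ P) := ⟨0, 1, fun _ hx => hx.1⟩
  have hP'P : P' = P := by
    rw [← hcosph.affineSpan_eq_of_infinite hCinf (fun x hx => (hC_eq ▸ hx).1) hP',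
      hcosph.affineSpan_eq_of_infinite hCinf inter_subset_right hP]
  have hli : LinearIndependent ℝ ![ξ - z, v] := by
    refine linearIndependent_pair_of_inner (w := ξ) ?_ hvξ (norm_ne_zero_iff.1 (hv ▸ one_ne_zero))
    rw [inner_sub_left, inner_self_eq_one_of_norm_eq_one hξ₁]
    exact (sub_pos.2 ((inner_lt_one_iff_real_of_norm_eq_one hz₁ hξ₁).2 hzξ)).ne'
  have hC : unitSphere n ∩ P = sphereCircle z (ξ - z) v :=
    sphere_inter_eq_sphereCircle hP hzC (P.vsub_mem_direction hξC.2 hzC.2) (hP'P ▸ hvP') hli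
  have hCk_eq : ∀ k, Ck k = sphereCircle z (b k - z) (NormedSpace.normalize (c k - b k)) := by
    intro k
    obtain ⟨⟨Pk, hPk, hCk_def, -⟩, hzk, hbk, hck⟩ := hCk k
    rw [hCk_def] at hzk hbk hck ⊢
    exact sphere_inter_eq_sphereCircle_of_mem hPk hzk hbk hck (hdist k).1 (hdist k).2.1
      (hdist k).2.2
  rw [SetsConvergeTo, hC]
  simp only [hCk_eq]
  exact tendsto_hausdorffDist_sphereCircle z (hbξ.sub tendsto_const_nhds) hdir hli

/-- If `b_k, c_k → ξ` with `(c_k − b_k)/‖c_k − b_k‖ → v`, and `C_k` is the circle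
through the pairwise distinct points `z, b_k, c_k`, then `C_k` converges in the
Hausdorff distance to the unique circle through `z` and `ξ` tangent to `v` at `ξ`. -/
theorem circles_tendsto_tangent_circle
    (n : ℕ) (hn : 2 ≤ n) (ξ v z : Euc n)
    (hξ : ξ ∈ unitSphere n) (hv : ‖v‖ = 1) (hvξ : inner ℝ v ξ = (0 : ℝ))
    (hz : z ∈ unitSphere n) (hzξ : z ≠ ξ)
    (b c : ℕ → Euc n) (hb : ∀ k, b k ∈ unitSphere n) (hc : ∀ k, c k ∈ unitSphere n)
    (hdist : ∀ k, z ≠ b k ∧ z ≠ c k ∧ b k ≠ c k)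
    (hbξ : Filter.Tendsto b Filter.atTop (nhds ξ))
    (hcξ : Filter.Tendsto c Filter.atTop (nhds ξ))
    (hdir : Filter.Tendsto (fun k => ‖c k - b k‖⁻¹ • (c k - b k))
      Filter.atTop (nhds v))
    (Ck : ℕ → Set (Euc n))
    (hCk : ∀ k, IsCircle n (Ck k) ∧ z ∈ Ck k ∧ b k ∈ Ck k ∧ c k ∈ Ck k)
    (C : Set (Euc n)) (hC : IsCircle n C) (hξC : ξ ∈ C) (hzC : z ∈ C)
    (htan : IsTangentAt n v C ξ) :
    SetsConvergeTo Ck C :=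
  circles_tendsto_tangent_circle_general n ξ v z hξ hv hvξ hz hzξ b c hdist hbξ hdir Ck hCk C hC hξC
    hzC htan
end
end
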